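/- arXiv:2505.22235 — 5 statements merged into one kernel-verified Lean document; each statement's English description precedes it below -/
import Mathlib

section
/- Let Φ ∈ ℝ^{N×r}, K^w ∈ ℝ^{N×N} symmetric positive definite, y ∈ ℝᴺ, σ > 0, and suppose ΦΦᵀ + σ²K^w is invertible. Then for any θ ∈ ℝ^r and c ∈ ℝᴺ with Φθ + c = y, it holds that ‖θ‖₂² + cᵀ(σ²K^w)⁻¹c ≥ yᵀ(ΦΦᵀ + σ²K^w)⁻¹y. -/
open Matrix

/-!
Completing the square. With `M = ΦΦᵀ + A` and `z = M⁻¹ y`, the candidate decomposition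
`θ₀ = Φᵀ z`, `c₀ = A z` of `y = Φθ + c` satisfies, for every other decomposition,
`‖θ‖² + cᵀA⁻¹c = yᵀz + ‖θ - θ₀‖² + (c - c₀)ᵀA⁻¹(c - c₀)`,
and the last two terms are nonnegative because `A⁻¹` is positive definite.
-/

namespace Matrix

variable {m n α : Type*} [Fintype m] [Fintype n] [DecidableEq n] [CommRing α]

lemma nonsing_inv_mulVec_mulVec {A : Matrix n n α} (hA : IsUnit A) (x : n → α) :
    A⁻¹ *ᵥ (A *ᵥ x) = x := by
  rw [mulVec_mulVec, nonsing_inv_mul A ((isUnit_iff_isUnit_det A).mp hA), one_mulVec]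

lemma mulVec_nonsing_inv_mulVec {A : Matrix n n α} (hA : IsUnit A) (x : n → α) :
    A *ᵥ (A⁻¹ *ᵥ x) = x := by
  rw [mulVec_mulVec, mul_nonsing_inv A ((isUnit_iff_isUnit_det A).mp hA), one_mulVec]

lemma dotProduct_self_add_dotProduct_inv_mulVec_eq {A : Matrix n n α} (hAsymm : A.IsSymm)
    (hA : IsUnit A) (Φ : Matrix n m α) (θ : m → α) (c z : n → α)
    (hz : (Φ * Φᵀ + A) *ᵥ z = Φ *ᵥ θ + c) :
    θ ⬝ᵥ θ + c ⬝ᵥ (A⁻¹ *ᵥ c) = (Φ *ᵥ θ + c) ⬝ᵥ z + (θ - Φᵀ *ᵥ z) ⬝ᵥ (θ - Φᵀ *ᵥ z)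
      + (c - A *ᵥ z) ⬝ᵥ (A⁻¹ *ᵥ (c - A *ᵥ z)) := by
  have hAinv_symm : (A⁻¹)ᵀ = A⁻¹ := by rw [transpose_nonsing_inv, hAsymm.eq]
  have hθ : (θ - Φᵀ *ᵥ z) ⬝ᵥ (θ - Φᵀ *ᵥ z)
      = θ ⬝ᵥ θ - 2 * (z ⬝ᵥ (Φ *ᵥ θ)) + z ⬝ᵥ ((Φ * Φᵀ) *ᵥ z) := by
    simp only [dotProduct_sub, sub_dotProduct, dotProduct_comm (Φᵀ *ᵥ z) θ,
      dotProduct_transpose_mulVec, mulVec_sub, ← mulVec_mulVec]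
    ring
  have hc : (c - A *ᵥ z) ⬝ᵥ (A⁻¹ *ᵥ (c - A *ᵥ z))
      = c ⬝ᵥ (A⁻¹ *ᵥ c) - 2 * (z ⬝ᵥ c) + z ⬝ᵥ (A *ᵥ z) := by
    have hcross : (A *ᵥ z) ⬝ᵥ (A⁻¹ *ᵥ c) = z ⬝ᵥ c := by
      rw [← hAinv_symm, dotProduct_transpose_mulVec, nonsing_inv_mulVec_mulVec hA,
        dotProduct_comm]
    simp only [mulVec_sub, dotProduct_sub, sub_dotProduct, nonsing_inv_mulVec_mulVec hA,
      hcross, dotProduct_comm c z, dotProduct_comm (A *ᵥ z) z]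
    ring
  have hzMz : z ⬝ᵥ ((Φ * Φᵀ) *ᵥ z) + z ⬝ᵥ (A *ᵥ z) = z ⬝ᵥ (Φ *ᵥ θ) + z ⬝ᵥ c := by
    rw [← dotProduct_add, ← add_mulVec, hz, dotProduct_add]
  rw [hθ, hc, add_dotProduct, dotProduct_comm (Φ *ᵥ θ) z, dotProduct_comm c z]
  linear_combination -hzMz

end Matrix

lemma Matrix.PosDef.dotProduct_inv_mulVec_le {n m : Type*} [Fintype n] [Fintype m] [DecidableEq n]
    {A : Matrix n n ℝ} (hA : A.PosDef) (Φ : Matrix n m ℝ) (θ : m → ℝ) (c : n → ℝ) :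
    (Φ *ᵥ θ + c) ⬝ᵥ ((Φ * Φᵀ + A)⁻¹ *ᵥ (Φ *ᵥ θ + c)) ≤ θ ⬝ᵥ θ + c ⬝ᵥ (A⁻¹ *ᵥ c) := by
  have hM : (Φ * Φᵀ + A).PosDef := by
    simpa only [conjTranspose_eq_transpose_of_trivial] using
      PosDef.posSemidef_add (posSemidef_self_mul_conjTranspose Φ) hA
  have hAsymm : A.IsSymm := by
    simpa only [IsSymm, ← conjTranspose_eq_transpose_of_trivial] using hA.isHermitian.eq
  set z := (Φ * Φᵀ + A)⁻¹ *ᵥ (Φ *ᵥ θ + c)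
  have hθ : 0 ≤ (θ - Φᵀ *ᵥ z) ⬝ᵥ (θ - Φᵀ *ᵥ z) := by
    simpa only [star_trivial] using dotProduct_star_self_nonneg (θ - Φᵀ *ᵥ z)
  have hc : 0 ≤ (c - A *ᵥ z) ⬝ᵥ (A⁻¹ *ᵥ (c - A *ᵥ z)) := by
    simpa only [star_trivial] using hA.inv.posSemidef.dotProduct_mulVec_nonneg (c - A *ᵥ z)
  rw [dotProduct_self_add_dotProduct_inv_mulVec_eq hAsymm hA.isUnit Φ θ c z
    (mulVec_nonsing_inv_mulVec hM.isUnit _)]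
  linarith

theorem stmt9_general (N r : ℕ) (Φ : Matrix (Fin N) (Fin r) ℝ)
    (Kw : Matrix (Fin N) (Fin N) ℝ) (hKw : Kw.PosDef)
    (y : Fin N → ℝ) (σ : ℝ) (hσ : 0 < σ)
    (θ : Fin r → ℝ) (c : Fin N → ℝ) (hdata : Φ *ᵥ θ + c = y) :
    y ⬝ᵥ ((Φ * Φᵀ + σ ^ 2 • Kw)⁻¹ *ᵥ y) ≤ θ ⬝ᵥ θ + c ⬝ᵥ ((σ ^ 2 • Kw)⁻¹ *ᵥ c) :=
  hdata ▸ (hKw.smul (pow_pos hσ 2)).dotProduct_inv_mulVec_le Φ θ c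

/-- Minimum joint weighted norm of any decomposition y = Φθ + c lower-bounds:
‖θ‖₂² + cᵀ(σ²K^w)⁻¹c ≥ yᵀ(ΦΦᵀ + σ²K^w)⁻¹y. -/
theorem stmt9 (N r : ℕ) (Φ : Matrix (Fin N) (Fin r) ℝ)
    (Kw : Matrix (Fin N) (Fin N) ℝ) (hKw : Kw.PosDef)
    (y : Fin N → ℝ) (σ : ℝ) (hσ : 0 < σ)
    (hinv : IsUnit (Φ * Φᵀ + σ ^ 2 • Kw))
    (θ : Fin r → ℝ) (c : Fin N → ℝ) (hdata : Φ *ᵥ θ + c = y) :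
    y ⬝ᵥ ((Φ * Φᵀ + σ ^ 2 • Kw)⁻¹ *ᵥ y) ≤ θ ⬝ᵥ θ + c ⬝ᵥ ((σ ^ 2 • Kw)⁻¹ *ᵥ c) :=
  stmt9_general N r Φ Kw hKw y σ hσ θ c hdata
end

section
/- Let Φ ∈ ℝ^{N×r} with r ≤ N, φ ∈ ℝ^{1×r}, and suppose φᵀ ∈ span of the columns of Φᵀ, i.e., φᵀ = Φᵀλ for some λ ∈ ℝᴺ. Let K^w ∈ ℝ^{N×N} symmetric positive definite and y ∈ ℝᴺ with yᵀ(K^w)⁻¹y ≤ Γ_w². If Φ has full column rank, then the supremum of φθ over θ ∈ ℝ^r subject to (y − Φθ)ᵀ(K^w)⁻¹(y − Φθ) ≤ Γ_w² equals φθ^μ + ‖Pφᵀ‖_{P⁻¹}·√(Γ_w² − yᵀ(K^w)⁻¹y + ‖θ^μ‖²_{P⁻¹}), where P = (Φᵀ(K^w)⁻¹Φ)⁻¹ and θ^μ = PΦᵀ(K^w)⁻¹y. -/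
/-!
Completing the square with the normal equations `Φᵀ K⁻¹ Φ θ^μ = Φᵀ K⁻¹ y` rewrites the constraint as
the ellipsoid `‖θ - θ^μ‖²_{P⁻¹} ≤ Γ² - yᵀK⁻¹y + ‖θ^μ‖²_{P⁻¹}` centred at `θ^μ`. Over an ellipsoid
`uᵀ A u ≤ c`, Cauchy–Schwarz for the inner product given by `A` bounds `φ u` by `√(φᵀ A⁻¹ φ) √c`,
with equality at the multiple of `A⁻¹ φ` lying on the boundary.
-/

open Matrix

namespace Matrix

lemma PosSemidef.isSymm {n : Type*} {A : Matrix n n ℝ} (hA : A.PosSemidef) : A.IsSymm :=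
  isHermitian_iff_isSymm.mp hA.isHermitian

variable {m n : Type*} [Fintype m] [Fintype n]

lemma IsSymm.dotProduct_mulVec_comm {R : Type*} [CommSemiring R] {A : Matrix n n R}
    (hA : A.IsSymm) (x y : n → R) : x ⬝ᵥ (A *ᵥ y) = y ⬝ᵥ (A *ᵥ x) := by
  rw [dotProduct_mulVec, ← mulVec_transpose, hA.eq, dotProduct_comm]

lemma PosSemidef.dotProduct_mulVec_sq_le {A : Matrix n n ℝ} (hA : A.PosSemidef) (x y : n → ℝ) :
    (x ⬝ᵥ (A *ᵥ y)) ^ 2 ≤ (x ⬝ᵥ (A *ᵥ x)) * (y ⬝ᵥ (A *ᵥ y)) := by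
  classical
  have h := LinearMap.BilinForm.apply_mul_apply_le_of_forall_zero_le (toLinearMap₂' ℝ A)
    (fun z => by simpa [toLinearMap₂'_apply'] using hA.dotProduct_mulVec_nonneg z) x y
  simp only [toLinearMap₂'_apply'] at h
  rwa [hA.isSymm.dotProduct_mulVec_comm y x, ← sq] at h

theorem PosDef.isGreatest_dotProduct_ellipsoid [DecidableEq n] {A : Matrix n n ℝ} (hA : A.PosDef)
    (φ θ₀ : n → ℝ) {c : ℝ} (hc : 0 ≤ c) :
    IsGreatest {v | ∃ θ, (θ - θ₀) ⬝ᵥ (A *ᵥ (θ - θ₀)) ≤ c ∧ v = φ ⬝ᵥ θ}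
      (φ ⬝ᵥ θ₀ + √(φ ⬝ᵥ (A⁻¹ *ᵥ φ)) * √c) := by
  set w := A⁻¹ *ᵥ φ
  set s := φ ⬝ᵥ w
  have hAw : A *ᵥ w = φ := by
    rw [mulVec_mulVec, mul_nonsing_inv _ ((isUnit_iff_isUnit_det _).mp hA.isUnit), one_mulVec]
  have hwA : ∀ u, w ⬝ᵥ (A *ᵥ u) = φ ⬝ᵥ u := fun u => by
    rw [hA.posSemidef.isSymm.dotProduct_mulVec_comm, hAw, dotProduct_comm]
  have hs : 0 ≤ s := by simpa using hA.inv.posSemidef.dotProduct_mulVec_nonneg φ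
  constructor
  · set t := √c / √s
    refine ⟨θ₀ + t • w, ?_, ?_⟩
    · rw [add_sub_cancel_left, mulVec_smul, dotProduct_smul, smul_dotProduct, hwA, smul_eq_mul,
        smul_eq_mul]
      rcases hs.eq_or_lt with hs0 | hs0
      · simp [s, ← hs0, hc]
      · rw [← mul_assoc, ← sq, div_pow, Real.sq_sqrt hc, Real.sq_sqrt hs,
          div_mul_cancel₀ _ hs0.ne']
    · rw [dotProduct_add, dotProduct_smul, smul_eq_mul, div_mul_eq_mul_div, mul_div_assoc,
        Real.div_sqrt, mul_comm]
  · rintro v ⟨θ, hθ, rfl⟩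
    have hcs := hA.posSemidef.dotProduct_mulVec_sq_le w (θ - θ₀)
    rw [hwA, hwA] at hcs
    have : φ ⬝ᵥ (θ - θ₀) ≤ √s * √c := by
      rw [← Real.sqrt_mul hs]
      exact (le_abs_self _).trans (Real.abs_le_sqrt (hcs.trans (mul_le_mul_of_nonneg_left hθ hs)))
    rw [dotProduct_sub] at this
    linarith

lemma residual_dotProduct_eq_of_normal_equations {M : Matrix m m ℝ} (hM : M.IsSymm)
    (Φ : Matrix m n ℝ) (y : m → ℝ) {θ₀ : n → ℝ}
    (hθ₀ : (Φᵀ * M * Φ) *ᵥ θ₀ = Φᵀ *ᵥ (M *ᵥ y)) (θ : n → ℝ) :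
    (y - Φ *ᵥ θ) ⬝ᵥ (M *ᵥ (y - Φ *ᵥ θ)) = y ⬝ᵥ (M *ᵥ y) - θ₀ ⬝ᵥ ((Φᵀ * M * Φ) *ᵥ θ₀)
      + (θ - θ₀) ⬝ᵥ ((Φᵀ * M * Φ) *ᵥ (θ - θ₀)) := by
  have hΦ : ∀ u z, (Φ *ᵥ u) ⬝ᵥ z = u ⬝ᵥ (Φᵀ *ᵥ z) := fun u z => by
    rw [dotProduct_comm, dotProduct_mulVec, ← mulVec_transpose, dotProduct_comm]
  have hG : ∀ u v, (Φ *ᵥ u) ⬝ᵥ (M *ᵥ (Φ *ᵥ v)) = u ⬝ᵥ ((Φᵀ * M * Φ) *ᵥ v) := fun u v => by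
    rw [hΦ, mulVec_mulVec, mulVec_mulVec, Matrix.mul_assoc]
  have hy : ∀ u, (Φ *ᵥ u) ⬝ᵥ (M *ᵥ y) = u ⬝ᵥ ((Φᵀ * M * Φ) *ᵥ θ₀) := fun u => by
    rw [hΦ, hθ₀]
  have hy' : ∀ u, y ⬝ᵥ (M *ᵥ (Φ *ᵥ u)) = u ⬝ᵥ ((Φᵀ * M * Φ) *ᵥ θ₀) := fun u => by
    rw [hM.dotProduct_mulVec_comm, hy]
  have hGsymm : (Φᵀ * M * Φ).IsSymm := by
    simp [IsSymm, Matrix.transpose_mul, hM.eq, Matrix.mul_assoc]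
  have hθ₀θ := hGsymm.dotProduct_mulVec_comm θ₀ θ
  simp only [mulVec_sub, dotProduct_sub, sub_dotProduct, hG, hy, hy', hθ₀θ]
  ring

end Matrix

theorem stmt10_general (N r : ℕ) (Φ : Matrix (Fin N) (Fin r) ℝ)
    (φ : Fin r → ℝ)
    (hΦ : ∀ x : Fin r → ℝ, Φ *ᵥ x = 0 → x = 0)
    (Kw : Matrix (Fin N) (Fin N) ℝ) (hKw : Kw.PosDef)
    (y : Fin N → ℝ) (Γw : ℝ) (hy : y ⬝ᵥ (Kw⁻¹ *ᵥ y) ≤ Γw ^ 2) :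
    letI P : Matrix (Fin r) (Fin r) ℝ := (Φᵀ * Kw⁻¹ * Φ)⁻¹
    letI θμ : Fin r → ℝ := P *ᵥ (Φᵀ *ᵥ (Kw⁻¹ *ᵥ y))
    IsLUB {v : ℝ | ∃ θ : Fin r → ℝ,
        (y - Φ *ᵥ θ) ⬝ᵥ (Kw⁻¹ *ᵥ (y - Φ *ᵥ θ)) ≤ Γw ^ 2 ∧ v = φ ⬝ᵥ θ}
      (φ ⬝ᵥ θμ + Real.sqrt ((P *ᵥ φ) ⬝ᵥ (P⁻¹ *ᵥ (P *ᵥ φ))) *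
        Real.sqrt (Γw ^ 2 - y ⬝ᵥ (Kw⁻¹ *ᵥ y) + θμ ⬝ᵥ (P⁻¹ *ᵥ θμ))) := by
  set A := Φᵀ * Kw⁻¹ * Φ
  set θμ := A⁻¹ *ᵥ (Φᵀ *ᵥ (Kw⁻¹ *ᵥ y))
  have hinj : Function.Injective Φ.mulVec := fun u v huv =>
    sub_eq_zero.mp (hΦ _ (by rw [mulVec_sub, huv, sub_self]))
  have hA : A.PosDef := by
    simpa [A] using hKw.inv.conjTranspose_mul_mul_same hinj
  have hdet : IsUnit A.det := (isUnit_iff_isUnit_det _).mp hA.isUnit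
  have hnormal : A *ᵥ θμ = Φᵀ *ᵥ (Kw⁻¹ *ᵥ y) := by
    rw [mulVec_mulVec, mul_nonsing_inv _ hdet, one_mulVec]
  have hc : 0 ≤ Γw ^ 2 - y ⬝ᵥ (Kw⁻¹ *ᵥ y) + θμ ⬝ᵥ (A *ᵥ θμ) := by
    have := hA.posSemidef.dotProduct_mulVec_nonneg θμ
    simp only [star_trivial] at this
    linarith
  have hfeasible (θ : Fin r → ℝ) : (y - Φ *ᵥ θ) ⬝ᵥ (Kw⁻¹ *ᵥ (y - Φ *ᵥ θ)) ≤ Γw ^ 2 ↔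
      (θ - θμ) ⬝ᵥ (A *ᵥ (θ - θμ)) ≤ Γw ^ 2 - y ⬝ᵥ (Kw⁻¹ *ᵥ y) + θμ ⬝ᵥ (A *ᵥ θμ) := by
    rw [residual_dotProduct_eq_of_normal_equations hKw.inv.posSemidef.isSymm Φ y hnormal]
    constructor <;> intro <;> linarith
  rw [nonsing_inv_nonsing_inv _ hdet, mulVec_mulVec, mul_nonsing_inv _ hdet, one_mulVec,
    dotProduct_comm (A⁻¹ *ᵥ φ)]
  simp only [hfeasible]
  exact (hA.isGreatest_dotProduct_ellipsoid φ θμ hc).isLUB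

/-- Case-2 supremum: with φᵀ = Φᵀλ, Φ of full column rank, K^w ≻ 0 and
yᵀ(K^w)⁻¹y ≤ Γ_w², the supremum of φθ over the ellipsoid
(y − Φθ)ᵀ(K^w)⁻¹(y − Φθ) ≤ Γ_w² equals
φθ^μ + ‖Pφᵀ‖_{P⁻¹}·√(Γ_w² − yᵀ(K^w)⁻¹y + ‖θ^μ‖²_{P⁻¹}). -/
theorem stmt10 (N r : ℕ) (hr : r ≤ N) (Φ : Matrix (Fin N) (Fin r) ℝ)
    (φ : Fin r → ℝ) (lam : Fin N → ℝ) (hφ : φ = Φᵀ *ᵥ lam)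
    (hΦ : ∀ x : Fin r → ℝ, Φ *ᵥ x = 0 → x = 0)
    (Kw : Matrix (Fin N) (Fin N) ℝ) (hKw : Kw.PosDef)
    (y : Fin N → ℝ) (Γw : ℝ) (hy : y ⬝ᵥ (Kw⁻¹ *ᵥ y) ≤ Γw ^ 2) :
    letI P : Matrix (Fin r) (Fin r) ℝ := (Φᵀ * Kw⁻¹ * Φ)⁻¹
    letI θμ : Fin r → ℝ := P *ᵥ (Φᵀ *ᵥ (Kw⁻¹ *ᵥ y))
    IsLUB {v : ℝ | ∃ θ : Fin r → ℝ,
        (y - Φ *ᵥ θ) ⬝ᵥ (Kw⁻¹ *ᵥ (y - Φ *ᵥ θ)) ≤ Γw ^ 2 ∧ v = φ ⬝ᵥ θ}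
      (φ ⬝ᵥ θμ + Real.sqrt ((P *ᵥ φ) ⬝ᵥ (P⁻¹ *ᵥ (P *ᵥ φ))) *
        Real.sqrt (Γw ^ 2 - y ⬝ᵥ (Kw⁻¹ *ᵥ y) + θμ ⬝ᵥ (P⁻¹ *ᵥ θμ))) :=
  stmt10_general N r Φ φ hΦ Kw hKw y Γw hy
end

section
/- Let Φ ∈ ℝ^{N×r}, φ ∈ ℝ^{1×r}, K^w ∈ ℝ^{N×N} symmetric positive definite, y ∈ ℝᴺ, Γ_f > 0, Γ_w > 0, σ > 0 with ΦΦᵀ + σ²K^w invertible, and suppose yᵀ(ΦΦᵀ + σ²K^w)⁻¹y ≤ Γ_f² + Γ_w²/σ². Then the supremum of φθ over pairs (θ, c) ∈ ℝ^r × ℝᴺ subject to Φθ + c = y and ‖θ‖₂² + cᵀ(σ²K^w)⁻¹c ≤ Γ_f² + Γ_w²/σ² equals φθ^{μ,σ} + β_σ·√(φφᵀ − φΦᵀ(ΦΦᵀ + σ²K^w)⁻¹Φφᵀ), where θ^{μ,σ} is such that φθ^{μ,σ} = φΦᵀ(ΦΦᵀ + σ²K^w)⁻¹y and β_σ = √(Γ_f²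 + Γ_w²/σ² − yᵀ(ΦΦᵀ + σ²K^w)⁻¹y). -/
/-!
Eliminating `c = y - Φθ` and completing the square in `θ` (the push-through identity
`(1 + ΦᵀS⁻¹Φ)Φᵀ = ΦᵀS⁻¹(ΦΦᵀ + S)` identifies the centre) turns the constraint into the ellipsoid
`(θ - θ₀)ᵀ P (θ - θ₀) ≤ β²` with `P = 1 + ΦᵀS⁻¹Φ`, `θ₀ = Φᵀ(ΦΦᵀ + S)⁻¹y`, `S = σ²K^w`.
By Cauchy–Schwarz for the inner product of `P`, a linear functional `φ` attains
`φθ₀ + β √(φᵀP⁻¹φ)` as its maximum on that ellipsoid, and the Woodbury identity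
`P⁻¹ = 1 - Φᵀ(ΦΦᵀ + S)⁻¹Φ` rewrites `φᵀP⁻¹φ` as the posterior variance.
-/

open Matrix

section
variable {n : Type*} [Fintype n]

theorem Matrix.IsSymm.dotProduct_mulVec_comm_s13 {P : Matrix n n ℝ} (hP : P.IsSymm) (u v : n → ℝ) :
    u ⬝ᵥ (P *ᵥ v) = v ⬝ᵥ (P *ᵥ u) := by
  rw [dotProduct_mulVec, ← mulVec_transpose, hP.eq, dotProduct_comm]

theorem Matrix.IsSymm.quadForm_sub {P : Matrix n n ℝ} (hP : P.IsSymm) (u v : n → ℝ) :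
    (u - v) ⬝ᵥ (P *ᵥ (u - v)) = u ⬝ᵥ (P *ᵥ u) - 2 * (u ⬝ᵥ (P *ᵥ v)) + v ⬝ᵥ (P *ᵥ v) := by
  rw [mulVec_sub, sub_dotProduct, dotProduct_sub, dotProduct_sub, hP.dotProduct_mulVec_comm_s13 v u]
  ring

theorem Matrix.PosSemidef.dotProduct_mulVec_sq_le_s13 {P : Matrix n n ℝ} (hP : P.PosSemidef)
    (u v : n → ℝ) : (u ⬝ᵥ (P *ᵥ v)) ^ 2 ≤ (u ⬝ᵥ (P *ᵥ u)) * (v ⬝ᵥ (P *ᵥ v)) := by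
  let := P.toSeminormedAddCommGroup hP
  let := P.toInnerProductSpace hP
  have inner_eq (x y : n → ℝ) : (inner ℝ x y : ℝ) = x ⬝ᵥ (P *ᵥ y) := by
    change (P *ᵥ y) ⬝ᵥ star x = _
    rw [star_trivial, dotProduct_comm]
  simpa only [sq, inner_eq] using real_inner_mul_inner_self_le u v

theorem Matrix.PosDef.isLUB_dotProduct_of_quadForm_sub_le [DecidableEq n] {P : Matrix n n ℝ}
    (hP : P.PosDef) (φ θ₀ : n → ℝ) {b : ℝ} (hb : 0 ≤ b) :
    IsLUB {v | ∃ θ, (θ - θ₀) ⬝ᵥ (P *ᵥ (θ - θ₀)) ≤ b ∧ v = φ ⬝ᵥ θ}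
      (φ ⬝ᵥ θ₀ + √b * √(φ ⬝ᵥ (P⁻¹ *ᵥ φ))) := by
  set q := φ ⬝ᵥ (P⁻¹ *ᵥ φ)
  set u := P⁻¹ *ᵥ φ
  have hP_symm : P.IsSymm := isHermitian_iff_isSymm.mp hP.isHermitian
  have hPu : P *ᵥ u = φ := by
    rw [mulVec_mulVec, mul_nonsing_inv P ((isUnit_iff_isUnit_det P).mp hP.isUnit), one_mulVec]
  have hq : 0 ≤ q := by simpa using hP.inv.posSemidef.dotProduct_mulVec_nonneg φ
  have huPu : u ⬝ᵥ (P *ᵥ u) = q := by rw [hPu, dotProduct_comm]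
  constructor
  · rintro _ ⟨θ, hθ, rfl⟩
    have hsq : (φ ⬝ᵥ (θ - θ₀)) ^ 2 ≤ (√b * √q) ^ 2 := calc
      (φ ⬝ᵥ (θ - θ₀)) ^ 2 = (u ⬝ᵥ (P *ᵥ (θ - θ₀))) ^ 2 := by
        rw [hP_symm.dotProduct_mulVec_comm_s13, hPu, dotProduct_comm]
      _ ≤ q * ((θ - θ₀) ⬝ᵥ (P *ᵥ (θ - θ₀))) := huPu ▸ hP.posSemidef.dotProduct_mulVec_sq_le_s13 _ _
      _ ≤ q * b := by gcongr
      _ = (√b * √q) ^ 2 := by rw [mul_pow, Real.sq_sqrt hb, Real.sq_sqrt hq, mul_comm]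
    have := (abs_le_of_sq_le_sq' hsq (by positivity)).2
    rw [dotProduct_sub] at this
    linarith
  · intro w hw
    apply hw
    -- for `q = 0` the junk value `√b / 0 = 0` makes the witness `θ₀`, which is still feasible
    refine ⟨θ₀ + (√b / √q) • u, ?_, ?_⟩
    · rw [add_sub_cancel_left, mulVec_smul, dotProduct_smul, smul_dotProduct, huPu,
        smul_eq_mul, smul_eq_mul, ← mul_assoc, div_mul_div_comm, Real.mul_self_sqrt hb,
        Real.mul_self_sqrt hq]
      rcases hq.eq_or_lt with hq0 | hq0
      · rw [← hq0, mul_zero]; exact hb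
      · rw [div_mul_cancel₀ _ hq0.ne']
    · rw [dotProduct_add, dotProduct_smul, smul_eq_mul, div_mul_eq_mul_div, mul_div_assoc,
        Real.div_sqrt]
end

section
variable {m n : Type*} [Fintype m] [Fintype n] [DecidableEq m] [DecidableEq n]

theorem Matrix.inv_one_add_transpose_mul_inv_mul {α : Type*} [CommRing α] (Φ : Matrix m n α) {S : Matrix m m α}
    (hS : IsUnit S) (hA : IsUnit (Φ * Φᵀ + S)) :
    (1 + Φᵀ * S⁻¹ * Φ)⁻¹ = 1 - Φᵀ * (Φ * Φᵀ + S)⁻¹ * Φ := by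
  have hdet : IsUnit S.det := (isUnit_iff_isUnit_det S).mp hS
  have h := add_mul_mul_inv_eq_sub 1 Φᵀ S⁻¹ Φ isUnit_one (isUnit_nonsing_inv_iff.mpr hS)
    (by rwa [nonsing_inv_nonsing_inv S hdet, inv_one, Matrix.mul_one, add_comm])
  simp only [nonsing_inv_nonsing_inv S hdet, inv_one, Matrix.mul_one, Matrix.one_mul] at h
  rwa [add_comm S] at h

theorem Matrix.PosDef.one_add_transpose_mul_inv_mul (Φ : Matrix m n ℝ) {S : Matrix m m ℝ}
    (hS : S.PosDef) : (1 + Φᵀ * S⁻¹ * Φ).PosDef :=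
  PosDef.one.add_posSemidef <| by
    simpa using hS.inv.posSemidef.conjTranspose_mul_mul_same Φ

theorem dotProduct_self_add_quadForm_residual_eq (Φ : Matrix m n ℝ) {S : Matrix m m ℝ}
    (hS : S.IsSymm) (hSu : IsUnit S) (hA : IsUnit (Φ * Φᵀ + S)) (y : m → ℝ) (θ : n → ℝ) :
    θ ⬝ᵥ θ + (y - Φ *ᵥ θ) ⬝ᵥ (S⁻¹ *ᵥ (y - Φ *ᵥ θ)) =
      y ⬝ᵥ ((Φ * Φᵀ + S)⁻¹ *ᵥ y) +
        (θ - Φᵀ *ᵥ ((Φ * Φᵀ + S)⁻¹ *ᵥ y)) ⬝ᵥ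
          ((1 + Φᵀ * S⁻¹ * Φ) *ᵥ (θ - Φᵀ *ᵥ ((Φ * Φᵀ + S)⁻¹ *ᵥ y))) := by
  set A := Φ * Φᵀ + S
  set M := S⁻¹
  set P := 1 + Φᵀ * M * Φ
  set z := A⁻¹ *ᵥ y
  have hM : M.IsSymm := hS.inv
  have hP : P.IsSymm := by
    refine isSymm_one.add ?_
    rw [IsSymm, transpose_mul, transpose_mul, transpose_transpose, hM.eq, Matrix.mul_assoc]
  have hMS : M * S = 1 := nonsing_inv_mul S ((isUnit_iff_isUnit_det S).mp hSu)
  have hSM : S * M = 1 := mul_nonsing_inv S ((isUnit_iff_isUnit_det S).mp hSu)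
  have hAz : A *ᵥ z = y := by
    rw [mulVec_mulVec, mul_nonsing_inv A ((isUnit_iff_isUnit_det A).mp hA), one_mulVec]
  have hPz : P *ᵥ (Φᵀ *ᵥ z) = Φᵀ *ᵥ (M *ᵥ y) := by
    have : P * Φᵀ = Φᵀ * M * A := by
      simp only [P, A, Matrix.add_mul, Matrix.mul_add, Matrix.one_mul, Matrix.mul_assoc, hMS,
        Matrix.mul_one, add_comm]
    rw [mulVec_mulVec, this, ← mulVec_mulVec, ← mulVec_mulVec, hAz]
  have hPθ : θ ⬝ᵥ (P *ᵥ θ) = θ ⬝ᵥ θ + (Φ *ᵥ θ) ⬝ᵥ (M *ᵥ (Φ *ᵥ θ)) := by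
    rw [add_mulVec, one_mulVec, dotProduct_add, ← mulVec_mulVec, ← mulVec_mulVec,
      dotProduct_mulVec θ Φᵀ, vecMul_transpose]
  have hθPz : θ ⬝ᵥ (P *ᵥ (Φᵀ *ᵥ z)) = y ⬝ᵥ (M *ᵥ (Φ *ᵥ θ)) := by
    rw [hPz, dotProduct_mulVec θ Φᵀ, vecMul_transpose, hM.dotProduct_mulVec_comm_s13]
  have hzPz : (Φᵀ *ᵥ z) ⬝ᵥ (P *ᵥ (Φᵀ *ᵥ z)) = y ⬝ᵥ (M *ᵥ y) - y ⬝ᵥ z := by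
    have hΦΦz : Φ *ᵥ (Φᵀ *ᵥ z) = y - S *ᵥ z := by
      rw [← hAz, add_mulVec, mulVec_mulVec, add_sub_cancel_right]
    rw [hPz, dotProduct_mulVec _ Φᵀ, vecMul_transpose, hΦΦz, sub_dotProduct,
      dotProduct_comm (S *ᵥ z), hS.dotProduct_mulVec_comm_s13, mulVec_mulVec, hSM, one_mulVec,
      dotProduct_comm z]
  rw [hM.quadForm_sub, hP.quadForm_sub, hPθ, hθPz, hzPz]
  ring
end

theorem stmt13_general (N r : ℕ) (Φ : Matrix (Fin N) (Fin r) ℝ) (φ : Fin r → ℝ)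
    (Kw : Matrix (Fin N) (Fin N) ℝ) (hKw : Kw.PosDef)
    (y : Fin N → ℝ) (Γf Γw σ : ℝ) (hσ : 0 < σ)
    (hinv : IsUnit (Φ * Φᵀ + σ ^ 2 • Kw))
    (hfeas : y ⬝ᵥ ((Φ * Φᵀ + σ ^ 2 • Kw)⁻¹ *ᵥ y) ≤ Γf ^ 2 + Γw ^ 2 / σ ^ 2) :
    IsLUB {v : ℝ | ∃ (θ : Fin r → ℝ) (c : Fin N → ℝ),
        Φ *ᵥ θ + c = y ∧
        θ ⬝ᵥ θ + c ⬝ᵥ ((σ ^ 2 • Kw)⁻¹ *ᵥ c) ≤ Γf ^ 2 + Γw ^ 2 / σ ^ 2 ∧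
        v = φ ⬝ᵥ θ}
      ((Φ *ᵥ φ) ⬝ᵥ ((Φ * Φᵀ + σ ^ 2 • Kw)⁻¹ *ᵥ y) +
        Real.sqrt (Γf ^ 2 + Γw ^ 2 / σ ^ 2 - y ⬝ᵥ ((Φ * Φᵀ + σ ^ 2 • Kw)⁻¹ *ᵥ y)) *
        Real.sqrt (φ ⬝ᵥ φ - (Φ *ᵥ φ) ⬝ᵥ ((Φ * Φᵀ + σ ^ 2 • Kw)⁻¹ *ᵥ (Φ *ᵥ φ)))) := by
  set S := σ ^ 2 • Kw
  set A := Φ * Φᵀ + S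
  set P := 1 + Φᵀ * S⁻¹ * Φ
  set θ₀ := Φᵀ *ᵥ (A⁻¹ *ᵥ y)
  have hS : S.PosDef := hKw.smul (by positivity)
  have hS_symm : S.IsSymm := isHermitian_iff_isSymm.mp hS.isHermitian
  have hfeasible : {v : ℝ | ∃ (θ : Fin r → ℝ) (c : Fin N → ℝ), Φ *ᵥ θ + c = y ∧
      θ ⬝ᵥ θ + c ⬝ᵥ (S⁻¹ *ᵥ c) ≤ Γf ^ 2 + Γw ^ 2 / σ ^ 2 ∧ v = φ ⬝ᵥ θ} =
      {v | ∃ θ, (θ - θ₀) ⬝ᵥ (P *ᵥ (θ - θ₀)) ≤ Γf ^ 2 + Γw ^ 2 / σ ^ 2 - y ⬝ᵥ (A⁻¹ *ᵥ y) ∧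
        v = φ ⬝ᵥ θ} := by
    ext v
    refine exists_congr fun θ => ?_
    simp only [← eq_sub_iff_add_eq', exists_eq_left, le_sub_iff_add_le',
      dotProduct_self_add_quadForm_residual_eq Φ hS_symm hS.isUnit hinv]
    exact Iff.rfl
  have hmean : (Φ *ᵥ φ) ⬝ᵥ (A⁻¹ *ᵥ y) = φ ⬝ᵥ θ₀ := by
    rw [dotProduct_mulVec φ, vecMul_transpose]
  have hvar : φ ⬝ᵥ φ - (Φ *ᵥ φ) ⬝ᵥ (A⁻¹ *ᵥ (Φ *ᵥ φ)) = φ ⬝ᵥ (P⁻¹ *ᵥ φ) := by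
    rw [inv_one_add_transpose_mul_inv_mul Φ hS.isUnit hinv, sub_mulVec, one_mulVec,
      dotProduct_sub, ← mulVec_mulVec, ← mulVec_mulVec, dotProduct_mulVec φ Φᵀ, vecMul_transpose]
  rw [hfeasible, hmean, hvar]
  exact (PosDef.one_add_transpose_mul_inv_mul Φ hS).isLUB_dotProduct_of_quadForm_sub_le φ θ₀
    (sub_nonneg.mpr hfeas)

/-- Relaxed bound (finite-dimensional Lemma 1): the supremum of φθ over pairs (θ,c) with
Φθ + c = y and ‖θ‖₂² + cᵀ(σ²K^w)⁻¹c ≤ Γ_f² + Γ_w²/σ² equals the GP posterior mean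
plus β_σ times the GP posterior standard deviation (with k = Φφᵀ, κ = φφᵀ). -/
theorem stmt13 (N r : ℕ) (Φ : Matrix (Fin N) (Fin r) ℝ) (φ : Fin r → ℝ)
    (Kw : Matrix (Fin N) (Fin N) ℝ) (hKw : Kw.PosDef)
    (y : Fin N → ℝ) (Γf Γw σ : ℝ) (hΓf : 0 < Γf) (hΓw : 0 < Γw) (hσ : 0 < σ)
    (hinv : IsUnit (Φ * Φᵀ + σ ^ 2 • Kw))
    (hfeas : y ⬝ᵥ ((Φ * Φᵀ + σ ^ 2 • Kw)⁻¹ *ᵥ y) ≤ Γf ^ 2 + Γw ^ 2 / σ ^ 2) :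
    IsLUB {v : ℝ | ∃ (θ : Fin r → ℝ) (c : Fin N → ℝ),
        Φ *ᵥ θ + c = y ∧
        θ ⬝ᵥ θ + c ⬝ᵥ ((σ ^ 2 • Kw)⁻¹ *ᵥ c) ≤ Γf ^ 2 + Γw ^ 2 / σ ^ 2 ∧
        v = φ ⬝ᵥ θ}
      ((Φ *ᵥ φ) ⬝ᵥ ((Φ * Φᵀ + σ ^ 2 • Kw)⁻¹ *ᵥ y) +
        Real.sqrt (Γf ^ 2 + Γw ^ 2 / σ ^ 2 - y ⬝ᵥ ((Φ * Φᵀ + σ ^ 2 • Kw)⁻¹ *ᵥ y)) *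
        Real.sqrt (φ ⬝ᵥ φ - (Φ *ᵥ φ) ⬝ᵥ ((Φ * Φᵀ + σ ^ 2 • Kw)⁻¹ *ᵥ (Φ *ᵥ φ)))) :=
  stmt13_general N r Φ φ Kw hKw y Γf Γw σ hσ hinv hfeas
end

section
/- Let K^f ∈ ℝ^{(N+1)×(N+1)} be symmetric positive semidefinite, partition it as [[K_{11}, k],[kᵀ, κ]] with K_{11} ∈ ℝ^{N×N}, k ∈ ℝᴺ, κ ∈ ℝ, and assume κ > 0. Let K^w ∈ ℝ^{N×N} symmetric positive definite, y ∈ ℝᴺ, Γ_f, Γ_w > 0. If ‖y − k·(Γ_f/√κ)‖²_{(K^w)⁻¹} ≤ Γ_w², then there exists a pair (θ, c) ∈ ℝ^r × ℝᴺ feasible for the constraints Φθ + c = y, ‖θ‖₂² ≤ Γ_f², cᵀ(K^w)⁻¹c ≤ Γ_w² (where K^f = Φ₊Φ₊ᵀ is any full-rank factorization with Φ ∈ ℝ^{N×r} the training rows and φ the test row) achieving test value φθ = √κ·Γ_f; moreover √κ·Γ_f is the maximum of φθ over all such feasible pairs. -/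
/-!
By Cauchy–Schwarz, `φ ⬝ᵥ θ ≤ √(φ ⬝ᵥ φ) · √(θ ⬝ᵥ θ) ≤ √(φ ⬝ᵥ φ) · Γ_f` for every feasible `θ`, whatever
the other constraints. The bound is attained by the unconstrained maximiser `θ* = Γ_f φ / √(φ ⬝ᵥ φ)`,
and the hypothesis on `y` says exactly that `θ*` together with the residual `c = y - Φ θ*` satisfies
the noise-energy constraint.
-/

open Matrix

section DotProduct

variable {ι : Type*} [Fintype ι]

theorem dotProduct_le_sqrt_mul_sqrt (u v : ι → ℝ) : u ⬝ᵥ v ≤ √(u ⬝ᵥ u) * √(v ⬝ᵥ v) := by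
  simpa only [dotProduct, pow_two] using Real.sum_mul_le_sqrt_mul_sqrt Finset.univ u v

theorem dotProduct_le_sqrt_mul_of_dotProduct_self_le {u v : ι → ℝ} {Γ : ℝ} (hΓ : 0 ≤ Γ)
    (hv : v ⬝ᵥ v ≤ Γ ^ 2) : u ⬝ᵥ v ≤ √(u ⬝ᵥ u) * Γ := by
  have hv' : √(v ⬝ᵥ v) ≤ Γ := (Real.sqrt_le_sqrt hv).trans_eq (Real.sqrt_sq hΓ)
  exact (dotProduct_le_sqrt_mul_sqrt u v).trans
    (mul_le_mul_of_nonneg_left hv' (Real.sqrt_nonneg _))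

/-- For `u = 0` this is `0`, since `Γ / 0 = 0`. -/
noncomputable def ballMaximizer (Γ : ℝ) (u : ι → ℝ) : ι → ℝ :=
  (Γ / √(u ⬝ᵥ u)) • u

theorem dotProduct_self_ballMaximizer_le (Γ : ℝ) (u : ι → ℝ) :
    ballMaximizer Γ u ⬝ᵥ ballMaximizer Γ u ≤ Γ ^ 2 := by
  have hs : √(u ⬝ᵥ u) ^ 2 = u ⬝ᵥ u := Real.sq_sqrt (dotProduct_self_star_nonneg u)
  have hratio : (√(u ⬝ᵥ u) / √(u ⬝ᵥ u)) ^ 2 ≤ 1 :=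
    pow_le_one₀ (div_nonneg (Real.sqrt_nonneg _) (Real.sqrt_nonneg _)) (div_self_le_one _)
  calc ballMaximizer Γ u ⬝ᵥ ballMaximizer Γ u
      = Γ ^ 2 * (√(u ⬝ᵥ u) / √(u ⬝ᵥ u)) ^ 2 := by
        simp only [ballMaximizer, dotProduct_smul, smul_dotProduct, smul_eq_mul]
        linear_combination (-Γ ^ 2 * (√(u ⬝ᵥ u))⁻¹ ^ 2) * hs
    _ ≤ Γ ^ 2 := mul_le_of_le_one_right (sq_nonneg Γ) hratio

theorem dotProduct_ballMaximizer (Γ : ℝ) (u : ι → ℝ) :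
    u ⬝ᵥ ballMaximizer Γ u = √(u ⬝ᵥ u) * Γ := by
  have hs : √(u ⬝ᵥ u) * √(u ⬝ᵥ u) = u ⬝ᵥ u := Real.mul_self_sqrt (dotProduct_self_star_nonneg u)
  rw [ballMaximizer, dotProduct_smul, smul_eq_mul]
  set s := √(u ⬝ᵥ u)
  rw [← hs, div_mul_eq_mul_div, mul_div_assoc, mul_self_div_self, mul_comm]

end DotProduct

theorem stmt14_general (N r : ℕ) (Φ : Matrix (Fin N) (Fin r) ℝ) (φ : Fin r → ℝ)
    (Kw : Matrix (Fin N) (Fin N) ℝ)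
    (y : Fin N → ℝ) (Γf Γw : ℝ) (hΓf : 0 < Γf)
    (hfeas : (y - (Γf / Real.sqrt (φ ⬝ᵥ φ)) • (Φ *ᵥ φ)) ⬝ᵥ
        (Kw⁻¹ *ᵥ (y - (Γf / Real.sqrt (φ ⬝ᵥ φ)) • (Φ *ᵥ φ))) ≤ Γw ^ 2) :
    IsGreatest {v : ℝ | ∃ (θ : Fin r → ℝ) (c : Fin N → ℝ),
        Φ *ᵥ θ + c = y ∧ θ ⬝ᵥ θ ≤ Γf ^ 2 ∧ c ⬝ᵥ (Kw⁻¹ *ᵥ c) ≤ Γw ^ 2 ∧ v = φ ⬝ᵥ θ}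
      (Real.sqrt (φ ⬝ᵥ φ) * Γf) := by
  refine ⟨⟨ballMaximizer Γf φ, y - Φ *ᵥ ballMaximizer Γf φ, add_sub_cancel _ _,
    dotProduct_self_ballMaximizer_le Γf φ, ?_, (dotProduct_ballMaximizer Γf φ).symm⟩, ?_⟩
  · rwa [ballMaximizer, mulVec_smul]
  · rintro v ⟨θ, c, -, hθ, -, rfl⟩
    exact dotProduct_le_sqrt_mul_of_dotProduct_self_le hΓf.le hθ

/-- Case 1 (Proposition 1): with K^f factored as Φ₊Φ₊ᵀ (training rows Φ, test row φ, so
K₁₁ = ΦΦᵀ, k = Φφᵀ, κ = φφᵀ > 0), if ‖y − k·(Γ_f/√κ)‖²_{(K^w)⁻¹} ≤ Γ_w² then the maximum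
of φθ over feasible pairs (θ,c) with Φθ + c = y, ‖θ‖₂² ≤ Γ_f², cᵀ(K^w)⁻¹c ≤ Γ_w²
equals √κ·Γ_f (and is attained). -/
theorem stmt14 (N r : ℕ) (Φ : Matrix (Fin N) (Fin r) ℝ) (φ : Fin r → ℝ)
    (Kw : Matrix (Fin N) (Fin N) ℝ) (hKw : Kw.PosDef)
    (y : Fin N → ℝ) (Γf Γw : ℝ) (hΓf : 0 < Γf) (hΓw : 0 < Γw)
    (hκ : 0 < φ ⬝ᵥ φ)
    (hfeas : (y - (Γf / Real.sqrt (φ ⬝ᵥ φ)) • (Φ *ᵥ φ)) ⬝ᵥ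
        (Kw⁻¹ *ᵥ (y - (Γf / Real.sqrt (φ ⬝ᵥ φ)) • (Φ *ᵥ φ))) ≤ Γw ^ 2) :
    IsGreatest {v : ℝ | ∃ (θ : Fin r → ℝ) (c : Fin N → ℝ),
        Φ *ᵥ θ + c = y ∧ θ ⬝ᵥ θ ≤ Γf ^ 2 ∧ c ⬝ᵥ (Kw⁻¹ *ᵥ c) ≤ Γw ^ 2 ∧ v = φ ⬝ᵥ θ}
      (Real.sqrt (φ ⬝ᵥ φ) * Γf) :=
  stmt14_general N r Φ φ Kw y Γf Γw hΓf hfeas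
end

section
/- Let K² ∈ ℝ^{N×N} be symmetric positive definite, let K¹ = ΦΦᵀ with Φ ∈ ℝ^{N×r} of full column rank r, and let y ∈ ℝᴺ. Then lim_{σ→0⁺} σ²(Γ_f² + Γ_w²/σ² − yᵀ(ΦΦᵀ + σ²K²)⁻¹y) = Γ_w² − yᵀ(K²)⁻¹y + (θ^μ)ᵀP⁻¹θ^μ, where P = (Φᵀ(K²)⁻¹Φ)⁻¹ and θ^μ = PΦᵀ(K²)⁻¹y. -/
open Matrix Filter Topology

/-- σ → 0⁺ limit: with K¹ = ΦΦᵀ (Φ of full column rank), K² ≻ 0,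
lim_{σ→0⁺} σ²(Γ_f² + Γ_w²/σ² − yᵀ(ΦΦᵀ + σ²K²)⁻¹y)
  = Γ_w² − yᵀ(K²)⁻¹y + (θ^μ)ᵀP⁻¹θ^μ,
where P = (Φᵀ(K²)⁻¹Φ)⁻¹ and θ^μ = PΦᵀ(K²)⁻¹y. -/
theorem stmt19 (N r : ℕ) (Φ : Matrix (Fin N) (Fin r) ℝ)
    (hΦ : ∀ x : Fin r → ℝ, Φ *ᵥ x = 0 → x = 0)
    (K₂ : Matrix (Fin N) (Fin N) ℝ) (hK₂ : K₂.PosDef)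
    (y : Fin N → ℝ) (Γf Γw : ℝ) (hΓf : 0 < Γf) (hΓw : 0 < Γw) :
    letI P : Matrix (Fin r) (Fin r) ℝ := (Φᵀ * K₂⁻¹ * Φ)⁻¹
    letI θμ : Fin r → ℝ := P *ᵥ (Φᵀ *ᵥ (K₂⁻¹ *ᵥ y))
    Tendsto
      (fun σ : ℝ =>
        σ ^ 2 * (Γf ^ 2 + Γw ^ 2 / σ ^ 2 - y ⬝ᵥ ((Φ * Φᵀ + σ ^ 2 • K₂)⁻¹ *ᵥ y)))
      (nhdsWithin 0 (Set.Ioi 0))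
      (nhds (Γw ^ 2 - y ⬝ᵥ (K₂⁻¹ *ᵥ y) + θμ ⬝ᵥ (P⁻¹ *ᵥ θμ))) := by
  have hK₂inv : (K₂⁻¹).PosDef := hK₂.inv
  have hΦT : Φᴴ = Φᵀ := by ext i j; simp [Matrix.conjTranspose_apply]
  have hKsymm : (K₂⁻¹)ᵀ = K₂⁻¹ := by
    have h := hK₂inv.isHermitian.eq
    rwa [show (K₂⁻¹)ᴴ = (K₂⁻¹)ᵀ from by ext i j; simp [Matrix.conjTranspose_apply]] at h
  set M : Matrix (Fin r) (Fin r) ℝ := Φᵀ * K₂⁻¹ * Φ with hMdef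
  have hMh : M.IsHermitian := by
    have h := Matrix.isHermitian_conjTranspose_mul_mul Φ hK₂inv.isHermitian
    rwa [hΦT] at h
  have hM : M.PosDef := by
    refine Matrix.PosDef.of_dotProduct_mulVec_pos hMh (fun x hx => ?_)
    have h1 : Φ *ᵥ x ≠ 0 := fun h => hx (hΦ x h)
    have h2 := hK₂inv.dotProduct_mulVec_pos h1
    have h3 : x ⬝ᵥ (M *ᵥ x) = (Φ *ᵥ x) ⬝ᵥ (K₂⁻¹ *ᵥ (Φ *ᵥ x)) := by
      rw [hMdef, ← Matrix.mulVec_mulVec, ← Matrix.mulVec_mulVec,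
        Matrix.dotProduct_mulVec x Φᵀ, Matrix.vecMul_transpose]
    simpa [h3] using h2
  have hMu : IsUnit M.det := isUnit_iff_ne_zero.mpr hM.det_pos.ne'
  have hK₂u : IsUnit K₂.det := isUnit_iff_ne_zero.mpr hK₂.det_pos.ne'
  set v : Fin r → ℝ := Φᵀ *ᵥ (K₂⁻¹ *ᵥ y) with hvdef
  -- Identify the target value
  have htar : (M⁻¹ *ᵥ v) ⬝ᵥ ((M⁻¹)⁻¹ *ᵥ (M⁻¹ *ᵥ v)) = v ⬝ᵥ (M⁻¹ *ᵥ v) := by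
    have hPinv : (M⁻¹)⁻¹ = M := Matrix.nonsing_inv_nonsing_inv M hMu
    have h4 : M *ᵥ (M⁻¹ *ᵥ v) = v := by
      rw [Matrix.mulVec_mulVec, Matrix.mul_nonsing_inv M hMu, Matrix.one_mulVec]
    rw [hPinv, h4, dotProduct_comm]
  -- positive definiteness of the small shifted matrix
  have hS : ∀ σ : ℝ, σ ≠ 0 → (σ ^ 2 • (1:Matrix (Fin r) (Fin r) ℝ) + M).PosDef := by
    intro σ hσ
    have hσ2 : (0:ℝ) < σ ^ 2 := by positivity
    refine Matrix.PosDef.add_posSemidef ?_ hM.posSemidef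
    rw [Matrix.smul_one_eq_diagonal]
    exact Matrix.posDef_diagonal_iff.mpr fun _ => hσ2
  -- Woodbury inverse for σ ≠ 0
  have key : ∀ σ : ℝ, σ ≠ 0 →
      (Φ * Φᵀ + σ ^ 2 • K₂)⁻¹
        = (σ ^ 2)⁻¹ • (K₂⁻¹ - K₂⁻¹ * Φ * (σ ^ 2 • 1 + M)⁻¹ * (Φᵀ * K₂⁻¹)) := by
    intro σ hσ
    have hσ2 : (0:ℝ) < σ ^ 2 := by positivity
    have hSu : IsUnit (σ ^ 2 • (1:Matrix (Fin r) (Fin r) ℝ) + M).det :=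
      isUnit_iff_ne_zero.mpr (hS σ hσ).det_pos.ne'
    set S : Matrix (Fin r) (Fin r) ℝ := (σ ^ 2 • 1 + M)⁻¹ with hSdef
    set w : Matrix (Fin r) (Fin N) ℝ := Φᵀ * K₂⁻¹ with hwdef
    have hSc : σ ^ 2 • (S * w) + M * (S * w) = w := by
      calc σ ^ 2 • (S * w) + M * (S * w)
          = (σ ^ 2 • (1:Matrix (Fin r) (Fin r) ℝ) + M) * (S * w) := by
            rw [Matrix.add_mul, Matrix.smul_mul, Matrix.one_mul]
        _ = w := by rw [← Matrix.mul_assoc, Matrix.mul_nonsing_inv _ hSu, Matrix.one_mul]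
    apply Matrix.inv_eq_right_inv
    rw [Matrix.mul_smul]
    have expand : (Φ * Φᵀ + σ ^ 2 • K₂) * (K₂⁻¹ - K₂⁻¹ * Φ * S * w) = σ ^ 2 • 1 := by
      have hterm : (Φ * Φᵀ + σ ^ 2 • K₂) * (K₂⁻¹ - K₂⁻¹ * Φ * S * w)
          = Φ * w - Φ * (M * (S * w)) + σ ^ 2 • (K₂ * K₂⁻¹)
            - σ ^ 2 • (K₂ * (K₂⁻¹ * (Φ * (S * w)))) := by
        simp only [hwdef, hMdef, Matrix.mul_sub, Matrix.add_mul, Matrix.smul_mul,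
          Matrix.mul_smul, Matrix.mul_assoc, Matrix.one_mul]
        abel
      have h5 : K₂ * (K₂⁻¹ * (Φ * (S * w))) = Φ * (S * w) :=
        Matrix.mul_nonsing_inv_cancel_left _ _ hK₂u
      rw [hterm, Matrix.mul_nonsing_inv _ hK₂u, h5]
      have hfold : Φ * (M * (S * w)) + σ ^ 2 • (Φ * (S * w)) = Φ * w := by
        rw [← Matrix.mul_smul, ← Matrix.mul_add, add_comm, hSc]
      rw [← hfold]
      abel
    rw [expand, smul_smul, inv_mul_cancel₀ hσ2.ne', one_smul]
  -- the simplified function agrees with the original on Ioi 0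
  have heq : ∀ σ ∈ Set.Ioi (0:ℝ),
      σ ^ 2 * Γf ^ 2 + Γw ^ 2 - y ⬝ᵥ (K₂⁻¹ *ᵥ y) + v ⬝ᵥ ((σ ^ 2 • 1 + M)⁻¹ *ᵥ v)
        = σ ^ 2 * (Γf ^ 2 + Γw ^ 2 / σ ^ 2 - y ⬝ᵥ ((Φ * Φᵀ + σ ^ 2 • K₂)⁻¹ *ᵥ y)) := by
    intro σ hσ
    have hσ0 : σ ≠ 0 := ne_of_gt hσ
    have hσ2 : (0:ℝ) < σ ^ 2 := by positivity
    rw [key σ hσ0]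
    set S : Matrix (Fin r) (Fin r) ℝ := (σ ^ 2 • 1 + M)⁻¹ with hSdef
    have hdot : y ⬝ᵥ ((K₂⁻¹ * Φ * S * (Φᵀ * K₂⁻¹)) *ᵥ y) = v ⬝ᵥ (S *ᵥ v) := by
      have e1 : (K₂⁻¹ * Φ * S * (Φᵀ * K₂⁻¹)) *ᵥ y
          = K₂⁻¹ *ᵥ (Φ *ᵥ (S *ᵥ v)) := by
        rw [hvdef]
        simp only [← Matrix.mulVec_mulVec, Matrix.mul_assoc]
      rw [e1, Matrix.dotProduct_mulVec y K₂⁻¹, ← Matrix.mulVec_transpose, hKsymm,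
        Matrix.dotProduct_mulVec (K₂⁻¹ *ᵥ y) Φ, ← Matrix.mulVec_transpose, ← hvdef]
    rw [Matrix.smul_mulVec, Matrix.sub_mulVec, dotProduct_smul, dotProduct_sub, hdot]
    field_simp
    have hσi : σ ^ 2 * σ⁻¹ ^ 2 = 1 := by rw [← mul_pow, mul_inv_cancel₀ hσ0, one_pow]
    linear_combination (y ⬝ᵥ (K₂⁻¹ *ᵥ y) - v ⬝ᵥ (S *ᵥ v)) * hσi
  -- continuity / limit of the simplified function
  have hcd : Continuous (fun A : Matrix (Fin r) (Fin r) ℝ => v ⬝ᵥ (A *ᵥ v)) :=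
    continuous_const.dotProduct (continuous_id.matrix_mulVec continuous_const)
  have hc1 : ContinuousAt (fun σ : ℝ => (σ ^ 2 • 1 + M : Matrix (Fin r) (Fin r) ℝ)) 0 :=
    (((continuous_pow 2).smul continuous_const).add continuous_const).continuousAt
  have h00 : ((0:ℝ) ^ 2 • 1 + M : Matrix (Fin r) (Fin r) ℝ) = M := by norm_num
  have hinv : ContinuousAt Inv.inv M := by
    apply continuousAt_matrix_inv
    rw [Ring.inverse_eq_inv']
    exact continuousAt_inv₀ hM.det_pos.ne'
  have hc2 : ContinuousAt (fun σ : ℝ => ((σ ^ 2 • 1 + M : Matrix (Fin r) (Fin r) ℝ))⁻¹) 0 := by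
    have h0 : (fun σ : ℝ => ((σ ^ 2 • 1 + M : Matrix (Fin r) (Fin r) ℝ))⁻¹)
        = Inv.inv ∘ (fun σ : ℝ => (σ ^ 2 • 1 + M : Matrix (Fin r) (Fin r) ℝ)) := rfl
    rw [h0]
    refine ContinuousAt.comp ?_ hc1
    rw [h00]; exact hinv
  have hcg : ContinuousAt (fun σ : ℝ =>
      σ ^ 2 * Γf ^ 2 + Γw ^ 2 - y ⬝ᵥ (K₂⁻¹ *ᵥ y) + v ⬝ᵥ ((σ ^ 2 • 1 + M)⁻¹ *ᵥ v)) 0 := by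
    refine ContinuousAt.add ?_ ?_
    · exact ((((continuous_pow 2).continuousAt).mul continuousAt_const).add
        continuousAt_const).sub continuousAt_const
    · exact hcd.continuousAt.comp hc2
  have hval : ((0:ℝ) ^ 2 * Γf ^ 2 + Γw ^ 2 - y ⬝ᵥ (K₂⁻¹ *ᵥ y)
      + v ⬝ᵥ (((0:ℝ) ^ 2 • 1 + M)⁻¹ *ᵥ v))
      = Γw ^ 2 - y ⬝ᵥ (K₂⁻¹ *ᵥ y) + v ⬝ᵥ (M⁻¹ *ᵥ v) := by
    rw [h00]; ring
  have hcont : Tendsto (fun σ : ℝ =>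
      σ ^ 2 * Γf ^ 2 + Γw ^ 2 - y ⬝ᵥ (K₂⁻¹ *ᵥ y) + v ⬝ᵥ ((σ ^ 2 • 1 + M)⁻¹ *ᵥ v))
      (nhdsWithin 0 (Set.Ioi 0))
      (nhds (Γw ^ 2 - y ⬝ᵥ (K₂⁻¹ *ᵥ y) + v ⬝ᵥ (M⁻¹ *ᵥ v))) := by
    have := hcg.tendsto.mono_left (nhdsWithin_le_nhds (s := Set.Ioi (0:ℝ)))
    rwa [hval] at this
  rw [show (Γw ^ 2 - y ⬝ᵥ (K₂⁻¹ *ᵥ y)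
        + (M⁻¹ *ᵥ v) ⬝ᵥ ((M⁻¹)⁻¹ *ᵥ (M⁻¹ *ᵥ v)))
      = Γw ^ 2 - y ⬝ᵥ (K₂⁻¹ *ᵥ y) + v ⬝ᵥ (M⁻¹ *ᵥ v) from by rw [htar]]
  exact Tendsto.congr' (Filter.eventuallyEq_of_mem self_mem_nhdsWithin heq) hcont
end
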